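/- arXiv:2009.02599 — 3 statements merged into one kernel-verified Lean document; each statement's English description precedes it below -/
import Mathlib

section
/- Each cubic x^3 - √2·x^2 + (1+√2)x - 1 and x^3 + √2·x^2 + (1-√2)x - 1 has exactly one real root, and that root lies in (1/2, 1). -/
open Set

section MonicCubic

variable {a b c x : ℝ}

/-- `f y - f x = (y - x) * (y ^ 2 + (x + a) * y + (x ^ 2 + a * x + b))`, and the hypothesis says
that this quadratic in `y` has negative discriminant. -/
theorem monic_cubic_root_unique (hx : x ^ 3 + a * x ^ 2 + b * x - c = 0)
    (hdisc : a ^ 2 - 4 * b < 3 * x ^ 2 + 2 * a * x) (y : ℝ)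
    (hy : y ^ 3 + a * y ^ 2 + b * y - c = 0) : y = x := by
  have hfactor : (y - x) * (y ^ 2 + (x + a) * y + (x ^ 2 + a * x + b)) = 0 := by
    linear_combination hy - hx
  have hquad : 0 < y ^ 2 + (x + a) * y + (x ^ 2 + a * x + b) := by
    nlinarith [sq_nonneg (2 * y + x + a)]
  linarith [(mul_eq_zero.mp hfactor).resolve_right hquad.ne']

theorem monic_cubic_existsUnique_root_Ioo {l u : ℝ} (hlu : l ≤ u)
    (hl : l ^ 3 + a * l ^ 2 + b * l - c < 0) (hu : 0 < u ^ 3 + a * u ^ 2 + b * u - c)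
    (hdisc : ∀ x ∈ Ioo l u, a ^ 2 - 4 * b < 3 * x ^ 2 + 2 * a * x) :
    ∃ x ∈ Ioo l u, x ^ 3 + a * x ^ 2 + b * x - c = 0 ∧
      ∀ y : ℝ, y ^ 3 + a * y ^ 2 + b * y - c = 0 → y = x := by
  have hcont : Continuous fun x : ℝ => x ^ 3 + a * x ^ 2 + b * x - c := by fun_prop
  obtain ⟨x, hxlu, hx⟩ := intermediate_value_Ioo hlu hcont.continuousOn ⟨hl, hu⟩
  exact ⟨x, hxlu, hx, monic_cubic_root_unique hx (hdisc x hxlu)⟩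

end MonicCubic

/-- Each cubic x^3 - √2·x^2 + (1+√2)x - 1 and x^3 + √2·x^2 + (1-√2)x - 1 has
    exactly one real root, and that root lies in (1/2, 1). -/
theorem stmt3 :
    (∃ x ∈ Set.Ioo (1 / 2 : ℝ) 1,
        x ^ 3 - Real.sqrt 2 * x ^ 2 + (1 + Real.sqrt 2) * x - 1 = 0 ∧
        ∀ y : ℝ, y ^ 3 - Real.sqrt 2 * y ^ 2 + (1 + Real.sqrt 2) * y - 1 = 0 → y = x) ∧
      (∃ x ∈ Set.Ioo (1 / 2 : ℝ) 1,
        x ^ 3 + Real.sqrt 2 * x ^ 2 + (1 - Real.sqrt 2) * x - 1 = 0 ∧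
        ∀ y : ℝ, y ^ 3 + Real.sqrt 2 * y ^ 2 + (1 - Real.sqrt 2) * y - 1 = 0 → y = x) := by
  have hsq : Real.sqrt 2 ^ 2 = 2 := Real.sq_sqrt zero_le_two
  have hgt : 1 < Real.sqrt 2 := by nlinarith [Real.sqrt_nonneg 2]
  have hlt : Real.sqrt 2 < 1.42 := by nlinarith
  constructor
  · have h := monic_cubic_existsUnique_root_Ioo (a := -Real.sqrt 2) (b := 1 + Real.sqrt 2)
      (c := 1) (l := 1 / 2) (u := 1) (by norm_num) (by nlinarith) (by nlinarith)
      (fun x _ => by nlinarith [sq_nonneg (3 * x - Real.sqrt 2), Real.sqrt_nonneg 2])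
    simpa only [neg_mul, ← sub_eq_add_neg] using h
  · -- the discriminant condition fails near 1/2, so the root is located in (3/4, 1)
    obtain ⟨x, ⟨hlx, hxu⟩, hx, huniq⟩ := monic_cubic_existsUnique_root_Ioo (a := Real.sqrt 2)
      (b := 1 - Real.sqrt 2) (c := 1) (l := 3 / 4) (u := 1) (by norm_num) (by nlinarith)
      (by nlinarith) (fun x ⟨hx, _⟩ => by nlinarith)
    exact ⟨x, ⟨by linarith, hxu⟩, hx, huniq⟩
end

section
/- If α, α₁ ∈ (0,1) are distinct, then the vectors (log α, log α₁) and (log(1-α), log(1-α₁)) are linearly independent over ℝ. -/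
/-!
The determinant `log α * log (1 - α₁) - log α₁ * log (1 - α)` vanishes exactly when
`log (1 - x) / log x` takes the same value at `α` and `α₁`; this is impossible because on `(0, 1)`
the numerator `-log (1 - x) > 0` increases while the denominator `-log x > 0` decreases.
-/

open Real Set

theorem linearIndependent_pair_of_mul_sub_mul_ne_zero {R : Type*} [CommRing R] [NoZeroDivisors R]
    {a b c d : R} (h : a * d - b * c ≠ 0) : LinearIndependent R ![(a, b), (c, d)] := by
  rw [LinearIndependent.pair_iff]
  intro s t hst
  obtain ⟨h₁, h₂⟩ := Prod.ext_iff.mp hst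
  simp only [Prod.fst_add, Prod.snd_add, Prod.smul_fst, Prod.smul_snd, smul_eq_mul,
    Prod.fst_zero, Prod.snd_zero] at h₁ h₂
  have hs : s * (a * d - b * c) = 0 := by linear_combination d * h₁ - c * h₂
  have ht : t * (a * d - b * c) = 0 := by linear_combination a * h₂ - b * h₁
  exact ⟨(mul_eq_zero.mp hs).resolve_right h, (mul_eq_zero.mp ht).resolve_right h⟩

theorem Real.strictMonoOn_log_one_sub_div_log :
    StrictMonoOn (fun x => log (1 - x) / log x) (Ioo 0 1) := by
  rintro x ⟨hx₀, hx₁⟩ y ⟨hy₀, hy₁⟩ hxy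
  simp only [← neg_div_neg_eq (log (1 - _))]
  apply div_lt_div₀
  · exact neg_lt_neg (log_lt_log (by linarith) (by linarith))
  · exact neg_le_neg (log_le_log hx₀ hxy.le)
  · exact neg_nonneg.mpr (log_nonpos (by linarith) (by linarith))
  · exact neg_pos.mpr (log_neg hy₀ hy₁)

/-- If α, α₁ ∈ (0,1) are distinct, then the vectors (log α, log α₁) and
    (log(1-α), log(1-α₁)) are linearly independent over ℝ. -/
theorem stmt8 (α α₁ : ℝ) (hα : α ∈ Set.Ioo (0 : ℝ) 1) (hα₁ : α₁ ∈ Set.Ioo (0 : ℝ) 1)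
    (hne : α ≠ α₁) :
    LinearIndependent ℝ
      ![((Real.log α, Real.log α₁) : ℝ × ℝ),
        ((Real.log (1 - α), Real.log (1 - α₁)) : ℝ × ℝ)] := by
  apply linearIndependent_pair_of_mul_sub_mul_ne_zero
  intro hdet
  refine hne (strictMonoOn_log_one_sub_div_log.injOn hα hα₁ ?_)
  have hlog : log α ≠ 0 := (log_neg hα.1 hα.2).ne
  have hlog₁ : log α₁ ≠ 0 := (log_neg hα₁.1 hα₁.2).ne
  rw [div_eq_div_iff hlog hlog₁]
  linear_combination -hdet
end

section
/- Under the same hypotheses (s = t, pluriclosed condition, admissibility), the number ρ₃ of unordered triples of pairwise distinct indices {i₁,i₂,i₃} ⊆ {1,…,3s} with σ_{i₁}(u)σ_{i₂}(u)σ_{i₃}(u) = 1 for all u ∈ U equals exactly s, the triples being precisely {i, s+i, 2s+i} for 1 ≤ i ≤ s. -/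
open Finset

/-!
Multiplying a relation `∏_{p ∈ S} σ_p = 1` by its complex conjugate and using that `σ_i` is real
while `|σ_{s+i}|² = |σ_{2s+i}|² = σ_i⁻¹` (pluriclosed condition) turns it into a relation
`∏ σ_i ^ m_i = 1` among the real characters, where `m_i` sums the weights `2, -1, -1` over the
indices of `S` in column `i`. Admissibility forces every `m_i = 0`, and a subset of `{2, -1, -1}`
sums to zero only if it is empty or everything. So `S` is a union of full columns
`{i, s+i, 2s+i}`, and a triple is a single column.
-/
theorem zpow_sum₀ {κ M : Type*} [CommGroupWithZero M] {x : M} (hx : x ≠ 0) (T : Finset κ)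
    (w : κ → ℤ) : x ^ ∑ j ∈ T, w j = ∏ j ∈ T, x ^ w j := by
  classical
  induction T using Finset.induction_on with
  | empty => simp
  | insert j T hj ih => rw [sum_insert hj, prod_insert hj, zpow_add₀ hx, ih]

theorem prod_zpow_snd_eq {ι κ M : Type*} [Fintype ι] [Fintype κ] [DecidableEq ι] [DecidableEq κ]
    [CommGroupWithZero M] (S : Finset (κ × ι)) (x : ι → M) (hx : ∀ i, x i ≠ 0) (w : κ → ℤ) :
    ∏ p ∈ S, x p.2 ^ w p.1 = ∏ i, x i ^ ∑ j with (j, i) ∈ S, w j :=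
  calc ∏ p ∈ S, x p.2 ^ w p.1
      = ∏ p, if p ∈ S then x p.2 ^ w p.1 else 1 := by
        rw [← prod_filter, filter_mem_eq_inter, univ_inter]
    _ = ∏ i, ∏ j, if (j, i) ∈ S then x i ^ w j else 1 := Fintype.prod_prod_type_right _
    _ = ∏ i, x i ^ ∑ j with (j, i) ∈ S, w j := by simp_rw [zpow_sum₀ (hx _), prod_filter]

theorem eq_univ_product_image_snd {ι κ : Type*} [Fintype κ] [DecidableEq ι] (S : Finset (κ × ι))
    (hS : ∀ j j' i, (j, i) ∈ S → (j', i) ∈ S) : S = univ ×ˢ S.image Prod.snd := by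
  ext ⟨j, i⟩
  simp only [mem_product, mem_univ, true_and, mem_image, Prod.exists, exists_eq_right]
  exact ⟨fun h => ⟨j, h⟩, fun ⟨j', h⟩ => hS j' j i h⟩

theorem exists_eq_univ_product_singleton {ι κ : Type*} [Fintype κ] [Nonempty κ] [DecidableEq ι]
    {S : Finset (κ × ι)} (hS : ∀ j j' i, (j, i) ∈ S → (j', i) ∈ S)
    (hcard : S.card = Fintype.card κ) : ∃ i, S = univ ×ˢ {i} := by
  rw [eq_univ_product_image_snd S hS] at hcard ⊢
  rw [card_product, card_univ] at hcard
  obtain ⟨i, hi⟩ := card_eq_one.mp ((mul_eq_left₀ Fintype.card_ne_zero).mp hcard)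
  exact ⟨i, by rw [hi]⟩

theorem triple_eq_univ_product {ι : Type*} [DecidableEq ι] (i : ι) :
    ({(0, i), (1, i), (2, i)} : Finset (Fin 3 × ι)) = univ ×ˢ {i} := by
  ext ⟨j, k⟩
  fin_cases j <;> simp [eq_comm]

def conjWeight : Fin 3 → ℤ := ![2, -1, -1]

theorem mem_of_sum_conjWeight_eq_zero :
    ∀ T : Finset (Fin 3), ∑ j ∈ T, conjWeight j = 0 → ∀ j ∈ T, ∀ j', j' ∈ T := by
  decide

section Characters

variable {G : Type*} [Group G] {s : ℕ} {τ : Fin 3 → Fin s → G →* ℂ}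

theorem mul_conj_eq_zpow_conjWeight (hreal : ∀ i u, (τ 0 i u).im = 0)
    (hconj : ∀ i u, τ 2 i u = starRingEnd ℂ (τ 1 i u))
    (hpc : ∀ i u, τ 0 i u * (τ 1 i u * τ 2 i u) = 1) (j : Fin 3) (i : Fin s) (u : G) :
    τ j i u * starRingEnd ℂ (τ j i u) = τ 0 i u ^ conjWeight j := by
  have hinv : τ 1 i u * τ 2 i u = (τ 0 i u)⁻¹ := eq_inv_of_mul_eq_one_right (hpc i u)
  fin_cases j
  · simp [conjWeight, Complex.conj_eq_iff_im.mpr (hreal i u), sq]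
  · simpa [conjWeight, ← hconj] using hinv
  · simpa [conjWeight, hconj, mul_comm] using hinv

theorem column_closed_of_prod_eq_one (hreal : ∀ i u, (τ 0 i u).im = 0)
    (hconj : ∀ i u, τ 2 i u = starRingEnd ℂ (τ 1 i u))
    (hpc : ∀ i u, τ 0 i u * (τ 1 i u * τ 2 i u) = 1)
    (hadm : ∀ m : Fin s → ℤ, (∀ u : G, ∏ i, τ 0 i u ^ m i = 1) → ∀ i, m i = 0)
    {S : Finset (Fin 3 × Fin s)} (hS : ∀ u, ∏ p ∈ S, τ p.1 p.2 u = 1) :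
    ∀ j j' i, (j, i) ∈ S → (j', i) ∈ S := by
  have hm := hadm (fun i => ∑ j with (j, i) ∈ S, conjWeight j) fun u => by
    calc ∏ i, τ 0 i u ^ ∑ j with (j, i) ∈ S, conjWeight j
        = ∏ p ∈ S, τ 0 p.2 u ^ conjWeight p.1 :=
          (prod_zpow_snd_eq S _ (fun i => left_ne_zero_of_mul_eq_one (hpc i u)) _).symm
      _ = ∏ p ∈ S, τ p.1 p.2 u * starRingEnd ℂ (τ p.1 p.2 u) :=
          prod_congr rfl fun p _ => (mul_conj_eq_zpow_conjWeight hreal hconj hpc _ _ _).symm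
      _ = 1 := by rw [prod_mul_distrib, ← map_prod, hS u, map_one, one_mul]
  intro j j' i hj
  simpa using mem_of_sum_conjWeight_eq_zero _ (hm i) j (by simpa using hj) j'

end Characters

theorem stmt17_general (s : ℕ) (G : Type*) [Group G]
    (τ : Fin 3 → Fin s → G →* ℂ)
    (hreal : ∀ (i : Fin s) (u : G), (τ 0 i u).im = 0 ∧ 0 < (τ 0 i u).re)
    (hconj : ∀ (i : Fin s) (u : G), τ 2 i u = (starRingEnd ℂ) (τ 1 i u))
    (hpc : ∀ (i : Fin s) (u : G), τ 0 i u * (τ 1 i u * τ 2 i u) = 1)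
    (hadm : ∀ m : Fin s → ℤ, (∀ u : G, ∏ i, τ 0 i u ^ m i = 1) → ∀ i, m i = 0) :
    {S : Finset (Fin 3 × Fin s) | S.card = 3 ∧ ∀ u : G, ∏ p ∈ S, τ p.1 p.2 u = 1}
        = {S : Finset (Fin 3 × Fin s) |
            ∃ i : Fin s, S = {((0 : Fin 3), i), ((1 : Fin 3), i), ((2 : Fin 3), i)}} ∧
      {S : Finset (Fin 3 × Fin s) |
        S.card = 3 ∧ ∀ u : G, ∏ p ∈ S, τ p.1 p.2 u = 1}.ncard = s := by
  have hset : {S : Finset (Fin 3 × Fin s) | S.card = 3 ∧ ∀ u : G, ∏ p ∈ S, τ p.1 p.2 u = 1}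
      = Set.range fun i => {((0 : Fin 3), i), ((1 : Fin 3), i), ((2 : Fin 3), i)} := by
    ext S
    constructor
    · rintro ⟨hcard, hS⟩
      obtain ⟨i, rfl⟩ := exists_eq_univ_product_singleton
        (column_closed_of_prod_eq_one (fun i u => (hreal i u).1) hconj hpc hadm hS) hcard
      exact ⟨i, triple_eq_univ_product i⟩
    · rintro ⟨i, rfl⟩
      refine ⟨by simp [triple_eq_univ_product], fun u => ?_⟩
      rw [prod_insert (by simp), prod_insert (by simp), prod_singleton]
      exact hpc i u
  refine ⟨by rw [hset]; ext S; exact exists_congr fun i => eq_comm, ?_⟩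
  rw [hset, Set.ncard_range_of_injective, Nat.card_eq_fintype_card, Fintype.card_fin]
  intro i j hij
  simpa using congrArg (((0 : Fin 3), i) ∈ ·) hij.symm

/-- Same setting as the previous statement (s = t, pluriclosed condition,
    admissibility): the set of unordered triples of pairwise distinct indices
    {i₁,i₂,i₃} ⊆ {1,…,3s} with σ_{i₁}(u)σ_{i₂}(u)σ_{i₃}(u) = 1 for all u ∈ U
    consists exactly of the s triples {i, s+i, 2s+i} (here {(0,i),(1,i),(2,i)});
    in particular ρ₃ = s. -/
theorem stmt17 (s : ℕ) (hs : 1 ≤ s) (G : Type*) [Group G]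
    (τ : Fin 3 → Fin s → G →* ℂ)
    (hreal : ∀ (i : Fin s) (u : G), (τ 0 i u).im = 0 ∧ 0 < (τ 0 i u).re)
    (hconj : ∀ (i : Fin s) (u : G), τ 2 i u = (starRingEnd ℂ) (τ 1 i u))
    (hpc : ∀ (i : Fin s) (u : G), τ 0 i u * (τ 1 i u * τ 2 i u) = 1)
    (hadm : ∀ m : Fin s → ℤ, (∀ u : G, ∏ i, τ 0 i u ^ m i = 1) → ∀ i, m i = 0) :
    {S : Finset (Fin 3 × Fin s) | S.card = 3 ∧ ∀ u : G, ∏ p ∈ S, τ p.1 p.2 u = 1}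
        = {S : Finset (Fin 3 × Fin s) |
            ∃ i : Fin s, S = {((0 : Fin 3), i), ((1 : Fin 3), i), ((2 : Fin 3), i)}} ∧
      {S : Finset (Fin 3 × Fin s) |
        S.card = 3 ∧ ∀ u : G, ∏ p ∈ S, τ p.1 p.2 u = 1}.ncard = s :=
  stmt17_general s G τ hreal hconj hpc hadm
end
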